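/- arXiv:1604.07566 — 4 statements merged into one kernel-verified Lean document; each statement's English description precedes it below -/
import Mathlib

section
/- The number of Lyndon words of length n over a finite alphabet of size m equals the necklace number φ_n(m) = (1/n) ∑_{d | n} μ(d) m^{n/d}, where μ is the Möbius function. -/
/-- A Lyndon word: a nonempty word strictly smaller (lexicographically)
than all of its nontrivial proper suffixes. -/
def IsLyndon {X : Type} [LinearOrder X] (w : List X) : Prop :=
  w ≠ [] ∧ ∀ s t : List X, w = s ++ t → s ≠ [] → t ≠ [] → List.Lex (· < ·) w t

/-!
A word is primitive when its rotation period (least `d > 0` with `w.rotate d = w`) is its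
length. Every word `w` of length `n` is uniquely a power `(replicate (n / d) u).flatten` of a
primitive word `u` of length `d ∣ n`, namely its prefix of length the rotation period; hence
`∑_{d ∣ n} P(d) = m ^ n`, where `P(d)` counts primitive words of length `d`. A primitive word
of length `d` has `d` distinct rotations, and exactly one of them, the least, is Lyndon; hence
`P(d) = d * L(d)` with `L(d)` the number of Lyndon words of length `d`. Möbius inversion of `∑_{d ∣ n} d * L(d) = m ^ n` gives the formula.
-/

namespace List

open Function

variable {α : Type*}

theorem flatten_replicate_append_comm (k : ℕ) (a b : List α) :
    (replicate k (a ++ b)).flatten ++ a = a ++ (replicate k (b ++ a)).flatten := by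
  induction k with
  | zero => simp
  | succ k ih => simp [replicate_succ, ← ih]

theorem rotate_flatten_replicate {u : List α} {j : ℕ} (hj : j ≤ u.length) (k : ℕ) :
    (replicate k u).flatten.rotate j = (replicate k (u.rotate j)).flatten := by
  obtain ⟨a, b, rfl, rfl⟩ : ∃ a b, u = a ++ b ∧ j = a.length :=
    ⟨u.take j, u.drop j, (take_append_drop j u).symm, (length_take_of_le hj).symm⟩
  cases k with
  | zero => simp
  | succ k =>
    rw [rotate_append_length_eq, replicate_succ, replicate_succ, flatten_cons, append_assoc,
      rotate_append_length_eq, append_assoc, flatten_replicate_append_comm, flatten_cons,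
      append_assoc]

theorem take_flatten_replicate {k : ℕ} (hk : 0 < k) (u : List α) :
    (replicate k u).flatten.take u.length = u := by
  obtain ⟨k, rfl⟩ := Nat.exists_eq_succ_of_ne_zero hk.ne'
  simp [replicate_succ]

theorem eq_flatten_replicate_of_append_comm {a b : List α} (h : a ++ b = b ++ a) {k : ℕ}
    (hk : b.length = k * a.length) : b = (replicate k a).flatten := by
  induction k generalizing b with
  | zero => simpa using hk
  | succ k ih =>
    have hab : a.length ≤ b.length := by rw [hk]; exact Nat.le_mul_of_pos_left _ k.succ_pos
    obtain ⟨b, rfl⟩ : ∃ c, b = a ++ c := by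
      refine ⟨b.drop a.length, ?_⟩
      conv_lhs => rw [← take_append_drop a.length b]
      rw [← take_append_of_le_length hab (l₂ := a), ← h, take_left]
    rw [append_assoc, append_cancel_left_eq] at h
    rw [ih h (by simp [Nat.succ_mul] at hk; omega), replicate_succ, flatten_cons]

theorem flatten_replicate_take_of_rotate_eq_self {w : List α} {d : ℕ} (hrot : w.rotate d = w)
    (hd : d ∣ w.length) : (replicate (w.length / d) (w.take d)).flatten = w := by
  rcases eq_or_ne w [] with rfl | hw
  · simp
  have hdw : d ≤ w.length := Nat.le_of_dvd (length_pos_iff.mpr hw) hd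
  have hcomm : w.take d ++ w = w ++ w.take d :=
    calc w.take d ++ w = w.take d ++ (w.drop d ++ w.take d) := by
          rw [← rotate_eq_drop_append_take hdw, hrot]
      _ = w ++ w.take d := by rw [← append_assoc, take_append_drop]
  refine (eq_flatten_replicate_of_append_comm hcomm ?_).symm
  rw [length_take_of_le hdw, Nat.div_mul_cancel hd]

theorem append_lt_append_iff_of_length_eq [LT α] {s₁ s₂ t₁ t₂ : List α}
    (h : s₁.length = s₂.length) :
    s₁ ++ t₁ < s₂ ++ t₂ ↔ s₁ < s₂ ∨ s₁ = s₂ ∧ t₁ < t₂ := by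
  induction s₁ generalizing s₂ with
  | nil => cases s₂ <;> simp_all
  | cons a s₁ ih =>
    cases s₂ with
    | nil => simp at h
    | cons b s₂ =>
      simp only [cons_append, cons_lt_cons_iff, ih (Nat.succ_inj.mp h), cons.injEq]
      tauto

theorem iterate_rotate_one (w : List α) (n : ℕ) : (·.rotate 1)^[n] w = w.rotate n := by
  induction n with
  | zero => simp
  | succ n ih => rw [iterate_succ_apply', ih, rotate_rotate]

noncomputable def rotationPeriod (w : List α) : ℕ := minimalPeriod (·.rotate 1) w

theorem rotationPeriod_dvd_iff {w : List α} {n : ℕ} :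
    w.rotationPeriod ∣ n ↔ w.rotate n = w := by
  rw [rotationPeriod, ← isPeriodicPt_iff_minimalPeriod_dvd, IsPeriodicPt, IsFixedPt,
    iterate_rotate_one]

theorem rotate_rotationPeriod (w : List α) : w.rotate w.rotationPeriod = w :=
  rotationPeriod_dvd_iff.mp dvd_rfl

theorem rotationPeriod_dvd_length (w : List α) : w.rotationPeriod ∣ w.length :=
  rotationPeriod_dvd_iff.mpr w.rotate_length

theorem rotationPeriod_le_length {w : List α} (hw : w ≠ []) : w.rotationPeriod ≤ w.length :=
  Nat.le_of_dvd (length_pos_iff.mpr hw) w.rotationPeriod_dvd_length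

theorem mem_periodicPts_rotate_one (w : List α) : w ∈ periodicPts (·.rotate 1) := by
  cases w with
  | nil => exact mk_mem_periodicPts one_pos rfl
  | cons a l =>
    exact mk_mem_periodicPts (n := (a :: l).length) (Nat.succ_pos _)
      (by rw [IsPeriodicPt, IsFixedPt, iterate_rotate_one, rotate_length])

theorem rotationPeriod_pos (w : List α) : 0 < w.rotationPeriod :=
  minimalPeriod_pos_of_mem_periodicPts w.mem_periodicPts_rotate_one

theorem rotationPeriod_rotate (w : List α) (n : ℕ) :
    (w.rotate n).rotationPeriod = w.rotationPeriod := by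
  rw [rotationPeriod, ← iterate_rotate_one,
    minimalPeriod_apply_iterate w.mem_periodicPts_rotate_one]
  rfl

theorem rotationPeriod_flatten_replicate {k : ℕ} (hk : 0 < k) (u : List α) :
    (replicate k u).flatten.rotationPeriod = u.rotationPeriod := by
  have key : ∀ {e}, e ≤ u.length →
      ((replicate k u).flatten.rotate e = (replicate k u).flatten ↔ u.rotate e = u) := by
    intro e he
    rw [rotate_flatten_replicate he]
    refine ⟨fun h => ?_, fun h => by rw [h]⟩
    have := take_flatten_replicate hk (u.rotate e)
    rw [length_rotate, h, take_flatten_replicate hk] at this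
    exact this.symm
  rcases eq_or_ne u [] with rfl | hu
  · simp
  have hq := rotationPeriod_le_length hu
  have hpq : (replicate k u).flatten.rotationPeriod ∣ u.rotationPeriod :=
    rotationPeriod_dvd_iff.mpr ((key hq).mpr u.rotate_rotationPeriod)
  have hp := (Nat.le_of_dvd u.rotationPeriod_pos hpq).trans hq
  exact Nat.dvd_antisymm hpq
    (rotationPeriod_dvd_iff.mpr ((key hp).mp (rotate_rotationPeriod _)))

def IsPrimitive (w : List α) : Prop := w ≠ [] ∧ w.rotationPeriod = w.length

theorem isPrimitive_iff {w : List α} :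
    w.IsPrimitive ↔ w ≠ [] ∧ ∀ j, 0 < j → j < w.length → w.rotate j ≠ w := by
  refine and_congr_right fun hw => ⟨fun h j hj0 hj hrot => ?_, fun h => ?_⟩
  · exact (Nat.le_of_dvd hj0 (rotationPeriod_dvd_iff.mpr hrot)).not_gt (h ▸ hj)
  · by_contra hne
    exact h _ w.rotationPeriod_pos (lt_of_le_of_ne (rotationPeriod_le_length hw) hne)
      w.rotate_rotationPeriod

theorem IsPrimitive.rotate {w : List α} (hw : w.IsPrimitive) (n : ℕ) :
    (w.rotate n).IsPrimitive :=
  ⟨by simpa using hw.1, by rw [rotationPeriod_rotate, length_rotate, hw.2]⟩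

theorem IsPrimitive.rotate_injOn {w : List α} (hw : w.IsPrimitive) :
    Set.InjOn w.rotate (Set.Iio w.length) := by
  intro i hi j hj h
  rw [← hw.2] at hi hj
  exact iterate_injOn_Iio_minimalPeriod hi hj (by simpa [iterate_rotate_one] using h)

theorem isPrimitive_take_rotationPeriod {w : List α} (hw : w ≠ []) :
    (w.take w.rotationPeriod).IsPrimitive := by
  have hp := rotationPeriod_le_length hw
  have hk : 0 < w.length / w.rotationPeriod := Nat.div_pos hp w.rotationPeriod_pos
  have hpow := flatten_replicate_take_of_rotate_eq_self w.rotate_rotationPeriod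
    w.rotationPeriod_dvd_length
  refine ⟨ne_nil_of_length_pos ?_, ?_⟩
  · simpa [length_take_of_le hp] using w.rotationPeriod_pos
  · conv_lhs => rw [← rotationPeriod_flatten_replicate hk, hpow]
    rw [length_take_of_le hp]

theorem IsPrimitive.rotationPeriod_flatten_replicate {u : List α} (hu : u.IsPrimitive) {k : ℕ}
    (hk : 0 < k) : (replicate k u).flatten.rotationPeriod = u.length := by
  rw [List.rotationPeriod_flatten_replicate hk, hu.2]

noncomputable def equivSigmaIsPrimitive {n : ℕ} (hn : 0 < n) :
    {w : List α // w.length = n} ≃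
      Σ d : n.divisors, {u : List α // u.length = d ∧ u.IsPrimitive} where
  toFun
    | ⟨w, hw⟩ =>
      have hw₀ : w ≠ [] := ne_nil_of_length_pos (hw ▸ hn)
      ⟨⟨w.rotationPeriod,
          Nat.mem_divisors.mpr ⟨hw ▸ w.rotationPeriod_dvd_length, hn.ne'⟩⟩,
        ⟨w.take w.rotationPeriod, length_take_of_le (rotationPeriod_le_length hw₀),
          isPrimitive_take_rotationPeriod hw₀⟩⟩
  invFun u := ⟨(replicate (n / u.1) u.2.1).flatten, by
    simp [u.2.2.1, Nat.div_mul_cancel (Nat.dvd_of_mem_divisors u.1.2)]⟩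
  left_inv := by
    rintro ⟨w, rfl⟩
    exact Subtype.ext (flatten_replicate_take_of_rotate_eq_self w.rotate_rotationPeriod
      w.rotationPeriod_dvd_length)
  right_inv := by
    rintro ⟨⟨d, hd⟩, ⟨u, hlen, hu⟩⟩
    have hk : 0 < n / d := Nat.div_pos (Nat.divisor_le hd) (Nat.pos_of_mem_divisors hd)
    refine Sigma.subtype_ext (Subtype.ext ?_) ?_
    · exact (hu.rotationPeriod_flatten_replicate hk).trans hlen
    · change take (rotationPeriod _) _ = u
      rw [hu.rotationPeriod_flatten_replicate hk, take_flatten_replicate hk]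

end List

open List

variable {X : Type} [LinearOrder X]

theorem IsLyndon.lt_rotate {w : List X} (hw : IsLyndon w) {k : ℕ} (hk₀ : 0 < k)
    (hk : k < w.length) : w < w.rotate k := by
  rw [rotate_eq_drop_append_take hk.le]
  refine Lex.append_right _ _ (hw.2 _ _ (take_append_drop k w).symm ?_ ?_) <;>
    simp [← length_pos_iff] <;> omega

theorem IsLyndon.isPrimitive {w : List X} (hw : IsLyndon w) : w.IsPrimitive :=
  isPrimitive_iff.mpr ⟨hw.1, fun _ hj₀ hj hrot => (hrot ▸ hw.lt_rotate hj₀ hj).false⟩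

theorem IsLyndon.eq_of_isRotated {l l' : List X} (hl : IsLyndon l) (hl' : IsLyndon l')
    (h : l ~r l') : l = l' := by
  obtain ⟨r, hr, rfl⟩ := isRotated_iff_mod.mp h
  rcases Nat.eq_zero_or_pos r with rfl | hr₀
  · exact (rotate_zero l).symm
  rcases hr.eq_or_lt with rfl | hr
  · exact l.rotate_length.symm
  have hback : (l.rotate r).rotate (l.length - r) = l := by
    rw [rotate_rotate, Nat.add_sub_cancel' hr.le, rotate_length]
  have := hl'.lt_rotate (k := l.length - r) (by omega)
    (by simpa using Nat.sub_lt (by omega) hr₀)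
  rw [hback] at this
  exact absurd (hl.lt_rotate hr₀ hr) this.asymm

theorem isLyndon_of_forall_le_rotate {w : List X} (hw : w.IsPrimitive)
    (hmin : ∀ k, w ≤ w.rotate k) : IsLyndon w := by
  refine ⟨hw.1, fun s t hst hs ht => ?_⟩
  have hlen : w.length = s.length + t.length := by rw [hst, length_append]
  have hrot_s : w.rotate s.length = t ++ s := by rw [hst, rotate_append_length_eq]
  have hlt : w < t ++ s := lt_of_le_of_ne (hrot_s ▸ hmin _) fun h =>
    isPrimitive_iff.mp hw |>.2 s.length (length_pos_iff.mpr hs)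
      (by simp [hlen, length_pos_iff.mpr ht]) (hrot_s.trans h.symm)
  -- If `w = t ++ r` with `r < s`, the rotation `r ++ t` would undercut `w = s ++ t`.
  obtain ⟨c, r, hcr, hc⟩ : ∃ c r, w = c ++ r ∧ c.length = t.length :=
    ⟨w.take t.length, w.drop t.length, (take_append_drop _ _).symm, by simp [hlen]⟩
  rw [hcr, append_lt_append_iff_of_length_eq hc] at hlt
  rcases hlt with hct | ⟨rfl, hrs⟩
  · rw [hcr, ← append_nil t]
    exact (append_lt_append_iff_of_length_eq hc).mpr (Or.inl hct)
  · have hr : r.length = s.length := by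
      have := congrArg length hcr
      simp only [length_append] at this
      omega
    have := hmin c.length
    rw [hcr, rotate_append_length_eq, ← hcr, hst] at this
    exact (((append_lt_append_iff_of_length_eq hr).mpr (Or.inl hrs)).not_ge this).elim

theorem List.IsPrimitive.exists_isLyndon_isRotated {w : List X} (hw : w.IsPrimitive) :
    ∃ l, IsLyndon l ∧ l ~r w := by
  classical
  obtain ⟨l, hl, hmin⟩ := w.cyclicPermutations.toFinset.exists_min_image id
    ⟨w, by simpa using w.mem_cyclicPermutations_self⟩
  simp only [mem_toFinset, mem_cyclicPermutations_iff, id] at hl hmin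
  obtain ⟨n, rfl⟩ := hl.symm
  refine ⟨w.rotate n, isLyndon_of_forall_le_rotate (hw.rotate n) fun k => hmin _ ?_, hl⟩
  exact (IsRotated.forall _ k).trans hl

noncomputable def lyndonProdFinEquiv (n : ℕ) :
    {l : List X // l.length = n ∧ IsLyndon l} × Fin n ≃
      {w : List X // w.length = n ∧ w.IsPrimitive} :=
  Equiv.ofBijective
    (fun p => ⟨p.1.1.rotate p.2, by rw [length_rotate, p.1.2.1],
      p.1.2.2.isPrimitive.rotate _⟩) <| by
    constructor
    · rintro ⟨⟨l, hl, hlyn⟩, i⟩ ⟨⟨l', hl', hlyn'⟩, j⟩ h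
      have hrot : l.rotate i = l'.rotate j := congrArg Subtype.val h
      obtain rfl : l = l' := hlyn.eq_of_isRotated hlyn'
        ((IsRotated.forall l i).symm.trans (hrot ▸ IsRotated.forall l' j))
      have : (i : ℕ) = j := hlyn.isPrimitive.rotate_injOn (by simp [hl]) (by simp [hl]) hrot
      simp [Fin.ext this]
    · rintro ⟨w, hlen, hw⟩
      obtain ⟨l, hl, r, hr⟩ := hw.exists_isLyndon_isRotated
      have hll : l.length = n := by rw [← hlen, ← hr, length_rotate]
      have hn : 0 < n := hlen ▸ length_pos_iff.mpr hw.1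
      refine ⟨⟨⟨l, hll, hl⟩, ⟨r % n, Nat.mod_lt _ hn⟩⟩, Subtype.ext ?_⟩
      simp [← hll, rotate_mod, hr]

theorem card_isPrimitive_eq_card_isLyndon_mul (n : ℕ) :
    Nat.card {w : List X // w.length = n ∧ w.IsPrimitive} =
      Nat.card {l : List X // l.length = n ∧ IsLyndon l} * n := by
  rw [← Nat.card_congr (lyndonProdFinEquiv n), Nat.card_prod,
    Nat.card_eq_fintype_card (α := Fin n), Fintype.card_fin]

theorem finite_length_eq_and {α : Type*} [Finite α] (n : ℕ) (p : List α → Prop) :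
    Finite {w : List α // w.length = n ∧ p w} :=
  have := Fintype.ofFinite α
  Finite.of_injective (β := List.Vector α n) (fun w => ⟨w.1, w.2.1⟩) fun _ _ h =>
    Subtype.ext (Subtype.mk.inj h)

theorem sum_card_isPrimitive {α : Type*} [Fintype α] {n : ℕ} (hn : 0 < n) :
    ∑ d ∈ n.divisors, Nat.card {u : List α // u.length = d ∧ u.IsPrimitive} =
      Fintype.card α ^ n := by
  have := finite_length_eq_and (α := α)
  calc ∑ d ∈ n.divisors, Nat.card {u : List α // u.length = d ∧ u.IsPrimitive}
      = Nat.card (Σ d : n.divisors, {u : List α // u.length = d ∧ u.IsPrimitive}) := by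
        rw [Nat.card_sigma]
        exact (Finset.sum_coe_sort n.divisors _).symm
    _ = Nat.card (List.Vector α n) := (Nat.card_congr (equivSigmaIsPrimitive hn)).symm
    _ = Fintype.card α ^ n := by rw [Nat.card_eq_fintype_card, card_vector]

/-- The number of Lyndon words of length `n` over an alphabet with `m` letters
equals the necklace number `φ_n(m) = (1/n) ∑_{d ∣ n} μ(d) m^(n/d)`. -/
theorem lyndon_count (m n : ℕ) (hn : 0 < n) :
    (Nat.card {w : List (Fin m) // w.length = n ∧ IsLyndon w} : ℤ) * n =
      ∑ d ∈ n.divisors, (ArithmeticFunction.moebius d) * (m : ℤ) ^ (n / d) := by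
  have hsum : ∀ k > 0, ∑ d ∈ k.divisors,
      (Nat.card {w : List (Fin m) // w.length = d ∧ IsLyndon w} : ℤ) * d = (m : ℤ) ^ k :=
    fun k hk => by
      have := sum_card_isPrimitive (α := Fin m) hk
      simp only [card_isPrimitive_eq_card_isLyndon_mul, Fintype.card_fin] at this
      exact_mod_cast this
  rw [← ArithmeticFunction.sum_eq_iff_sum_smul_moebius_eq.mp hsum n hn,
    ← Nat.sum_divisorsAntidiagonal fun a b =>
      (ArithmeticFunction.moebius a : ℤ) * (m : ℤ) ^ b]
  simp
end

section
/- For any words x_1 x_2 ⋯ x_k of length k over an alphabet X, the element (x_1 x_2 ⋯ x_k) + (-1)^k (x_k ⋯ x_2 x_1) of the free abelian group on words lies in the span of shuffle products u ш v of pairs of nonempty words; explicitly, (x_1⋯x_k) + (-1)^k (x_k⋯x_1) = ∑_{l=1}^{k-1} (-1)^{l-1} (x_l⋯x_2x_1) ш (x_{l+1}⋯x_k). -/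
/-!
Write `A i = (x_i ⋯ x₁) ш (x_{i+1} ⋯ x_k)`, so `A 0 = x₁ ⋯ x_k`, `A k = x_k ⋯ x₁`, and the claim is
`∑_{i=0}^k (-1)^i A i = 0`. Generalize the left factor to `x_i ⋯ x₁ a p`: then the alternating sum
equals `a (p ш x₁ ⋯ x_k)`, by induction on `k`. Splitting the `i = 0` term by its first letter gives
`a (p ш x₁ ⋯ x_k) + x₁ ((a p) ш x₂ ⋯ x_k)`, and the remaining terms are minus the same sum for the
word `x₁ a p` against `x₂ ⋯ x_k`, which is `x₁ ((a p) ш x₂ ⋯ x_k)` by induction. For the original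
sum, peel off `A 0 = x₁ ⋯ x_k`; the rest is `-x₁ (∅ ш x₂ ⋯ x_k) = -x₁ ⋯ x_k`.
-/

/-- The shuffle product of two words, as an element of the free `ℤ`-module on words. -/
noncomputable def shuffle {X : Type} : List X → List X → (List X →₀ ℤ)
  | [], v => Finsupp.single v 1
  | u, [] => Finsupp.single u 1
  | a :: u, b :: v =>
      Finsupp.mapDomain (List.cons a) (shuffle u (b :: v)) +
      Finsupp.mapDomain (List.cons b) (shuffle (a :: u) v)
  termination_by u v => u.length + v.length

theorem alternating_sum_range_add_two {M : Type*} [AddCommGroup M] (f : ℕ → M) (n : ℕ) :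
    ∑ i ∈ Finset.range (n + 2), (-1 : ℤ) ^ i • f i =
      f 0 + (-1 : ℤ) ^ (n + 1) • f (n + 1) - ∑ i ∈ Finset.range n, (-1 : ℤ) ^ i • f (i + 1) := by
  rw [Finset.sum_range_succ', Finset.sum_range_succ]
  simp only [pow_succ, mul_neg_one, neg_smul, Finset.sum_neg_distrib, pow_zero, one_smul]
  abel

namespace shuffle

variable {X : Type}

@[simp]
theorem nil_left (v : List X) : shuffle [] v = Finsupp.single v 1 := by
  rw [shuffle]

@[simp]
theorem nil_right (u : List X) : shuffle u [] = Finsupp.single u 1 := by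
  cases u <;> simp [shuffle]

theorem cons_cons (a b : X) (u v : List X) :
    shuffle (a :: u) (b :: v) =
      Finsupp.mapDomain (List.cons a) (shuffle u (b :: v)) +
      Finsupp.mapDomain (List.cons b) (shuffle (a :: u) v) := by
  rw [shuffle]

theorem alternating_sum_reverse_take_append_cons (s p : List X) (a : X) :
    ∑ i ∈ Finset.range (s.length + 1),
        (-1 : ℤ) ^ i • shuffle ((s.take i).reverse ++ a :: p) (s.drop i) =
      Finsupp.mapDomain (List.cons a) (shuffle p s) := by
  induction s generalizing a p with
  | nil => simp [Finsupp.mapDomain_single]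
  | cons b s ih =>
    have hrest := ih (a :: p) b
    rw [List.length_cons, Finset.sum_range_succ']
    simp only [List.take_succ_cons, List.drop_succ_cons, List.reverse_cons, List.append_assoc,
      List.cons_append, List.nil_append, pow_succ, mul_neg_one, neg_smul, Finset.sum_neg_distrib,
      hrest, List.take_zero, List.drop_zero, List.reverse_nil, pow_zero, one_smul, cons_cons]
    abel

theorem alternating_sum_reverse_take_eq_zero {l : List X} (hl : l ≠ []) :
    ∑ i ∈ Finset.range (l.length + 1),
        (-1 : ℤ) ^ i • shuffle (l.take i).reverse (l.drop i) = 0 := by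
  obtain ⟨b, s, rfl⟩ := List.exists_cons_of_ne_nil hl
  have hrest := alternating_sum_reverse_take_append_cons s [] b
  rw [List.length_cons, Finset.sum_range_succ']
  simp only [List.take_succ_cons, List.drop_succ_cons, List.reverse_cons, pow_succ, mul_neg_one,
    neg_smul, Finset.sum_neg_distrib, hrest]
  simp [Finsupp.mapDomain_single]

end shuffle

/-- For a word `l = x₁ ⋯ x_k` (k ≥ 1),
`(x₁ ⋯ x_k) + (-1)^k (x_k ⋯ x₁) = ∑_{l=1}^{k-1} (-1)^{l-1} (x_l ⋯ x₁) ш (x_{l+1} ⋯ x_k)`,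
so this element lies in the span of shuffle products of pairs of nonempty words. -/
theorem word_plus_sign_reverse_eq_sum_shuffles {X : Type} (l : List X) (hl : l ≠ []) :
    Finsupp.single l (1 : ℤ) + (-1 : ℤ) ^ l.length • Finsupp.single l.reverse (1 : ℤ) =
      ∑ i ∈ Finset.range (l.length - 1),
        (-1 : ℤ) ^ i • shuffle ((l.take (i + 1)).reverse) (l.drop (i + 1)) := by
  obtain ⟨n, hn⟩ : ∃ n, l.length = n + 1 :=
    Nat.exists_eq_add_one.mpr (List.length_pos_iff.mpr hl)
  have vanish := shuffle.alternating_sum_reverse_take_eq_zero hl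
  rw [hn, alternating_sum_range_add_two, sub_eq_zero, ← hn, List.take_length, List.drop_length,
    shuffle.nil_right, List.take_zero, List.drop_zero, List.reverse_nil, shuffle.nil_left]
    at vanish
  rwa [hn, Nat.add_sub_cancel, ← hn]
end

section
/- Let R be a commutative ring, (·,·) : A × B → R a non-degenerate bilinear map of R-modules, L a finite set, and a_w ∈ A, b_w ∈ B for w ∈ L. If the matrix ((a_w, b_{w'}))_{w,w' ∈ L} is invertible and the family (a_w) generates A, then (a_w)_{w∈L} is an R-basis of A and (b_w)_{w∈L} is an R-basis of B. -/
/-!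
Pairing with the `b`'s sends `a` to the rows of the invertible matrix `M = ((a_w, b_{w'}))`, and
pairing with the `a`'s sends `b` to its columns; rows and columns of an invertible matrix are
linearly independent, so `a` and `b` are. Since the `a`'s span `A` and the pairing separates
points of `B`, `y ↦ ((a_w, y))_w` embeds `B` into `R^L`, where the image of `b` (the columns of
`M`) spans; hence `b` spans `B`.
-/

open Submodule

theorem Matrix.span_range_col_eq_top_of_isUnit {R m : Type*} [CommRing R] [Fintype m]
    [DecidableEq m] {M : Matrix m m R} (hM : IsUnit M) : span R (Set.range M.col) = ⊤ := by
  rw [← Matrix.range_mulVecLin, LinearMap.range_eq_top]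
  exact Matrix.mulVec_surjective_iff_isUnit.mpr hM

namespace LinearMap

variable {R A B ι κ : Type*} [CommRing R] [AddCommGroup A] [AddCommGroup B] [Module R A]
  [Module R B] (pair : A →ₗ[R] B →ₗ[R] R)

theorem linearIndependent_of_linearIndependent_row_pairing {a : ι → A} (b : κ → B)
    (h : LinearIndependent R (Matrix.of fun i j => pair (a i) (b j)).row) :
    LinearIndependent R a :=
  LinearIndependent.of_comp (LinearMap.pi fun j => pair.flip (b j)) h

theorem injective_pi_of_separatingRight {a : ι → A} (hsep : pair.SeparatingRight)
    (hgen : span R (Set.range a) = ⊤) : Function.Injective (LinearMap.pi fun i => pair (a i)) := by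
  rw [← LinearMap.ker_eq_bot, eq_bot_iff]
  intro y hy
  have hflip : pair.flip y = 0 := LinearMap.ext_on_range hgen fun i => congrFun hy i
  exact hsep y fun x => LinearMap.congr_fun hflip x

theorem span_range_eq_top_of_span_col_pairing {a : ι → A} {b : κ → B}
    (hsep : pair.SeparatingRight) (hgen : span R (Set.range a) = ⊤)
    (h : span R (Set.range (Matrix.of fun i j => pair (a i) (b j)).col) = ⊤) :
    span R (Set.range b) = ⊤ := by
  set φ : B →ₗ[R] ι → R := LinearMap.pi fun i => pair (a i)
  have hcol : (Matrix.of fun i j => pair (a i) (b j)).col = φ ∘ b := rfl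
  rw [← comap_map_eq_of_injective (injective_pi_of_separatingRight pair hsep hgen)
    (span R (Set.range b)), map_span, ← Set.range_comp, ← hcol, h, comap_top]

end LinearMap

theorem basis_of_invertible_pairing_matrix_general (R : Type) [CommRing R]
    (A B : Type) [AddCommGroup A] [AddCommGroup B] [Module R A] [Module R B]
    (pair : A →ₗ[R] B →ₗ[R] R)
    (hright : ∀ b : B, (∀ a : A, pair a b = 0) → b = 0)
    (L : Type) [Fintype L] [DecidableEq L] (a : L → A) (b : L → B)
    (hinv : IsUnit (Matrix.of fun w w' : L => pair (a w) (b w')))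
    (hgen : Submodule.span R (Set.range a) = ⊤) :
    (LinearIndependent R a ∧ Submodule.span R (Set.range a) = ⊤) ∧
    (LinearIndependent R b ∧ Submodule.span R (Set.range b) = ⊤) := by
  have ha : LinearIndependent R a :=
    pair.linearIndependent_of_linearIndependent_row_pairing b
      (Matrix.linearIndependent_rows_of_isUnit hinv)
  have hb : LinearIndependent R b :=
    pair.flip.linearIndependent_of_linearIndependent_row_pairing a
      (Matrix.linearIndependent_cols_of_isUnit hinv)
  exact ⟨⟨ha, hgen⟩, hb, pair.span_range_eq_top_of_span_col_pairing hright hgen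
    (Matrix.span_range_col_eq_top_of_isUnit hinv)⟩

/-- If `(·,·) : A × B → R` is a non-degenerate bilinear map, `L` a finite index set,
`a : L → A` generates `A`, and the matrix `((a_w, b_{w'}))` is invertible, then
`(a_w)` is an `R`-basis of `A` and `(b_w)` is an `R`-basis of `B`. -/
theorem basis_of_invertible_pairing_matrix (R : Type) [CommRing R]
    (A B : Type) [AddCommGroup A] [AddCommGroup B] [Module R A] [Module R B]
    (pair : A →ₗ[R] B →ₗ[R] R)
    (hleft : ∀ a : A, (∀ b : B, pair a b = 0) → a = 0)
    (hright : ∀ b : B, (∀ a : A, pair a b = 0) → b = 0)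
    (L : Type) [Fintype L] [DecidableEq L] (a : L → A) (b : L → B)
    (hinv : IsUnit (Matrix.of fun w w' : L => pair (a w) (b w')))
    (hgen : Submodule.span R (Set.range a) = ⊤) :
    (LinearIndependent R a ∧ Submodule.span R (Set.range a) = ⊤) ∧
    (LinearIndependent R b ∧ Submodule.span R (Set.range b) = ⊤) :=
  basis_of_invertible_pairing_matrix_general R A B pair hright L a b hinv hgen
end

section
/- For each Lyndon word w over a totally ordered alphabet X, define τ_w in the free group S on X and P_w ∈ ℤ⟨X⟩ recursively: τ_{(x)} = x, P_{(x)} = x for letters x; and for the standard factorization w = w'w'' of a Lyndon word of length > 1, τ_w = [τ_{w'}, τ_{w''}] and P_w = P_{w'}P_{w''} − P_{w''}P_{w'}. Then P_w − w is a ℤ-linear combination of words of length |w| that are strictly larger than w in the lexicographic order. -/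
/-- `w = w' ++ w''` is the standard factorization of the Lyndon word `w`:
`w''` is the longest proper Lyndon suffix of `w`. -/
def IsStandardFactorization {X : Type} [LinearOrder X] (w w' w'' : List X) : Prop :=
  w = w' ++ w'' ∧ w' ≠ [] ∧ IsLyndon w'' ∧
    ∀ s t : List X, w = s ++ t → s ≠ [] → t ≠ [] → IsLyndon t → t.length ≤ w''.length

/-!
The right factor of the standard factorization `w = uv` of a Lyndon word is its
lexicographically least nonempty proper suffix, and this minimality shows that `u` and `v` are
Lyndon. By induction `P_u = u + A` and `P_v = v + B`, with `A` and `B` supported on words of the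
same length strictly above `u` and `v`. Then `P_u P_v - uv = A P_v + u B` only involves words
above `uv`, while every word of `P_v P_u` begins with a word `≥ v` of length `|v| < |w|`, hence
lies above `w` because `w < v`.
-/

namespace List

variable {α : Type*} [LinearOrder α]

theorem lt_of_append_lt_append_left : ∀ {a b c : List α}, c ++ a < c ++ b → a < b
  | _, _, [], h => h
  | _, _, x :: _, h => by
    cases h with
    | rel hxx => exact absurd hxx (lt_irrefl x)
    | cons h => exact lt_of_append_lt_append_left h

theorem append_lt_append_of_lt_of_length_eq :
    ∀ {a b : List α}, a < b → a.length = b.length → ∀ c d : List α, a ++ c < b ++ d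
  | _, _, .nil, hl => by simp at hl
  | _, _, .rel h, _ => fun _ _ => .rel h
  | _, _, .cons h, hl => fun c d =>
    .cons (append_lt_append_of_lt_of_length_eq h (by simpa using hl) c d)

theorem lt_of_lt_append_of_not_prefix : ∀ {a b c : List α}, a < b ++ c → ¬b <+: a → a < b
  | _, [], _, _, hb => absurd nil_prefix hb
  | [], _ :: _, _, _, _ => .nil
  | x :: _, _ :: _, _, h, hb => by
    cases h with
    | rel hxy => exact .rel hxy
    | cons h =>
      exact .cons (lt_of_lt_append_of_not_prefix h fun hp => hb ((prefix_cons_inj x).mpr hp))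

theorem lt_of_append_lt_of_length_le :
    ∀ {a b c : List α}, a ++ b < c → c.length ≤ a.length → a < c
  | _, _, [], h, _ => absurd h (not_lex_nil)
  | [], _, _ :: _, _, hl => by simp at hl
  | _ :: _, _, _ :: _, h, hl => by
    cases h with
    | rel hxy => exact .rel hxy
    | cons h => exact .cons (lt_of_append_lt_of_length_le h (by simpa using hl))

end List

open scoped Pointwise

namespace MonoidAlgebra

variable {k G : Type*} [Semiring k]

theorem single_mem_supported {s : Set G} {g : G} (hg : g ∈ s) (r : k) :
    single g r ∈ supported k k s :=
  Finsupp.single_mem_supported k r hg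

theorem mul_mem_supported [Monoid G] {x y : MonoidAlgebra k G} {s t : Set G}
    (hx : x ∈ supported k k s) (hy : y ∈ supported k k t) :
    x * y ∈ supported k k (s * t) := by
  classical
  intro g hg
  obtain ⟨a, ha, b, hb, rfl⟩ := Finset.mem_mul.mp (support_coeff_mul_subset x y hg)
  exact Set.mul_mem_mul (hx ha) (hy hb)

end MonoidAlgebra

section StandardFactorization

variable {X : Type} [LinearOrder X]

def IsMinSuffixSplit (w u v : List X) : Prop :=
  w = u ++ v ∧ u ≠ [] ∧ v ≠ [] ∧
    ∀ s t : List X, w = s ++ t → s ≠ [] → t ≠ [] → v ≤ t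

theorem exists_isMinSuffixSplit {w : List X} (hlen : 1 < w.length) :
    ∃ u v : List X, IsMinSuffixSplit w u v := by
  set S : Set (List X) := {t | ∃ s, w = s ++ t ∧ s ≠ [] ∧ t ≠ []}
  have hfin : S.Finite :=
    w.tails.finite_toSet.subset fun t ⟨s, hst, _⟩ =>
      (List.mem_tails _ _).mpr ⟨s, hst.symm⟩
  have hne : S.Nonempty := by
    obtain ⟨x, y, r, rfl⟩ : ∃ x y r, w = x :: y :: r := by
      match w, hlen with
      | x :: y :: r, _ => exact ⟨x, y, r, rfl⟩
    exact ⟨y :: r, [x], rfl, List.cons_ne_nil _ _, List.cons_ne_nil _ _⟩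
  obtain ⟨v, ⟨u, huv, hu, hv⟩, hmin⟩ := S.exists_min_image id hfin hne
  exact ⟨u, v, huv, hu, hv, fun s t hst hs ht => hmin t ⟨s, hst, hs, ht⟩⟩

namespace IsMinSuffixSplit

variable {w u v : List X}

theorem isLyndon_right (h : IsMinSuffixSplit w u v) : IsLyndon v := by
  obtain ⟨huv, hu, hv, hmin⟩ := h
  refine ⟨hv, fun a b hab ha hb => lt_of_le_of_ne (hmin (u ++ a) b (by simp [huv, hab])
    (by simp [hu]) hb) ?_⟩
  rintro rfl
  exact ha (by simpa using congrArg List.length hab)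

theorem length_le (h : IsMinSuffixSplit w u v) :
    ∀ s t : List X, w = s ++ t → s ≠ [] → t ≠ [] → IsLyndon t →
      t.length ≤ v.length := by
  obtain ⟨huv, -, hv, hmin⟩ := h
  intro s t hst hs ht htL
  by_contra! hlt
  obtain ⟨r, rfl⟩ := List.suffix_of_suffix_length_le ⟨u, huv.symm⟩ ⟨s, hst.symm⟩ hlt.le
  have hr : r ≠ [] := by rintro rfl; simp at hlt
  exact not_lt_of_ge (hmin s (r ++ v) hst hs ht) (htL.2 r v rfl hr hv)

theorem isLyndon_left (h : IsMinSuffixSplit w u v) (hw : IsLyndon w) : IsLyndon u := by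
  obtain ⟨huv, hu, hv, hmin⟩ := h
  refine ⟨hu, fun p s hps hp hs => ?_⟩
  have hws : w < s ++ v := hw.2 p (s ++ v) (by simp [huv, hps]) hp (by simp [hs])
  have hsu : s.length ≤ u.length := by simp [hps]
  by_cases hsw : s <+: w
  · obtain ⟨r, hsr⟩ := hsw
    have hr : r ≠ [] := by
      rintro rfl
      have := congrArg List.length (hsr.trans huv)
      simp only [List.append_nil, List.length_append] at this
      have := List.length_pos_iff.mpr hv
      omega
    exact absurd (hmin s r hsr.symm hs hr)
      (not_le_of_gt (List.lt_of_append_lt_append_left (hsr ▸ hws)))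
  · exact List.lt_of_append_lt_of_length_le
      (huv ▸ List.lt_of_lt_append_of_not_prefix hws hsw) hsu

theorem isStandardFactorization (h : IsMinSuffixSplit w u v) : IsStandardFactorization w u v :=
  ⟨h.1, h.2.1, h.isLyndon_right, h.length_le⟩

end IsMinSuffixSplit

end StandardFactorization

section Triangularity

open MonoidAlgebra FreeMonoid

variable {X : Type} [LinearOrder X]

def wordsAbove (w : List X) : Set (FreeMonoid X) :=
  {q | q.toList.length = w.length ∧ w < q.toList}

def wordsAtLeast (w : List X) : Set (FreeMonoid X) :=
  {q | q.toList.length = w.length ∧ w ≤ q.toList}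

theorem wordsAbove_mul_wordsAtLeast_subset (u v : List X) :
    wordsAbove u * wordsAtLeast v ⊆ wordsAbove (u ++ v) := by
  rintro _ ⟨a, ⟨ha, hua⟩, b, ⟨hb, -⟩, rfl⟩
  refine ⟨by simp [ha, hb], ?_⟩
  simpa using List.append_lt_append_of_lt_of_length_eq hua ha.symm v b.toList

theorem singleton_mul_wordsAbove_subset (u v : List X) :
    {ofList u} * wordsAbove v ⊆ wordsAbove (u ++ v) := by
  rintro _ ⟨a, ha, b, ⟨hb, hvb⟩, rfl⟩
  rw [Set.mem_singleton_iff.mp ha]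
  exact ⟨by simp [hb], by simpa using List.append_left_lt hvb⟩

theorem wordsAtLeast_mul_subset_wordsAbove {w v : List X} (hwv : w < v) (u : List X)
    (hlen : w.length = v.length + u.length) :
    wordsAtLeast v * wordsAtLeast u ⊆ wordsAbove w := by
  rintro _ ⟨a, ⟨ha, hva⟩, b, ⟨hb, -⟩, rfl⟩
  refine ⟨by simp [ha, hb, hlen], ?_⟩
  simpa using List.Lex.append_right _ _ (lt_of_lt_of_le hwv hva)

theorem mem_supported_wordsAtLeast {R : Type*} [Ring R] {f : MonoidAlgebra R (FreeMonoid X)}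
    {w : List X} (hf : f - single (ofList w) 1 ∈ supported R R (wordsAbove w)) :
    f ∈ supported R R (wordsAtLeast w) := by
  have hrest : f - single (ofList w) 1 ∈ supported R R (wordsAtLeast w) :=
    supported_mono (fun _ hq => And.intro hq.1 hq.2.le) hf
  have hsingle : single (ofList w) (1 : R) ∈ supported R R (wordsAtLeast w) :=
    single_mem_supported (s := wordsAtLeast w) (And.intro rfl le_rfl) 1
  simpa using add_mem hrest hsingle

theorem sub_single_mem_supported_wordsAbove {R : Type*} [Ring R]
    (P : List X → MonoidAlgebra R (FreeMonoid X))
    (hbase : ∀ x : X, P [x] = single (ofList [x]) 1)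
    (hrec : ∀ w w' w'' : List X, IsLyndon w → 1 < w.length →
      IsStandardFactorization w w' w'' → P w = P w' * P w'' - P w'' * P w')
    {w : List X} (hw : IsLyndon w) :
    P w - single (ofList w) 1 ∈ supported R R (wordsAbove w) := by
  rcases Nat.lt_or_ge 1 w.length with hlen | hlen
  · obtain ⟨u, v, hsplit⟩ := exists_isMinSuffixSplit hlen
    obtain ⟨hw_eq, hu_ne, hv_ne, -⟩ := id hsplit
    have hlen_eq : w.length = u.length + v.length := by simp [hw_eq]
    have hu_pos := List.length_pos_iff.mpr hu_ne
    have hv_pos := List.length_pos_iff.mpr hv_ne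
    have ihu := sub_single_mem_supported_wordsAbove P hbase hrec (hsplit.isLyndon_left hw)
    have ihv := sub_single_mem_supported_wordsAbove P hbase hrec hsplit.isLyndon_right
    have hwv : w < v := hw.2 u v hw_eq hu_ne hv_ne
    have hPw : P w - single (ofList w) 1 = (P u - single (ofList u) 1) * P v +
        single (ofList u) 1 * (P v - single (ofList v) 1) - P v * P u := by
      rw [hrec w u v hw hlen hsplit.isStandardFactorization, hw_eq, ofList_append,
        ← one_mul (1 : R), ← single_mul_single]
      noncomm_ring
    rw [hPw]
    refine sub_mem (add_mem ?_ ?_) ?_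
    · exact supported_mono (hw_eq ▸ wordsAbove_mul_wordsAtLeast_subset u v)
        (mul_mem_supported ihu (mem_supported_wordsAtLeast ihv))
    · exact supported_mono (hw_eq ▸ singleton_mul_wordsAbove_subset u v)
        (mul_mem_supported (single_mem_supported (Set.mem_singleton _) 1) ihv)
    · exact supported_mono (wordsAtLeast_mul_subset_wordsAbove hwv u (by omega))
        (mul_mem_supported (mem_supported_wordsAtLeast ihv) (mem_supported_wordsAtLeast ihu))
  · obtain ⟨x, rfl⟩ := List.length_eq_one_iff.mp
      (le_antisymm hlen (List.length_pos_iff.mpr hw.1))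
    simp [hbase]
termination_by w.length
decreasing_by all_goals omega

end Triangularity

/-- Triangularity: if `P : words → ℤ⟨X⟩` satisfies `P_{(x)} = x` and
`P_w = P_{w'} P_{w''} − P_{w''} P_{w'}` along standard factorizations of Lyndon words,
then for every Lyndon word `w`, `P_w − w` is a `ℤ`-linear combination of words of
length `|w|` that are strictly larger than `w` lexicographically. -/
theorem lyndon_polynomial_triangular (X : Type) [LinearOrder X]
    (P : List X → MonoidAlgebra ℤ (FreeMonoid X))
    (hbase : ∀ x : X, P [x] = MonoidAlgebra.single (FreeMonoid.ofList [x]) (1 : ℤ))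
    (hrec : ∀ w w' w'' : List X, IsLyndon w → 1 < w.length →
      IsStandardFactorization w w' w'' →
      P w = P w' * P w'' - P w'' * P w')
    (w : List X) (hw : IsLyndon w) :
    ∀ v ∈ (P w - MonoidAlgebra.single (FreeMonoid.ofList w) (1 : ℤ)).coeff.support,
      (FreeMonoid.toList v).length = w.length ∧
      List.Lex (· < ·) w (FreeMonoid.toList v) :=
  fun _ hv => sub_single_mem_supported_wordsAbove P hbase hrec hw hv
end
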